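/- arXiv:1601.03031 — 2 statements merged into one kernel-verified Lean document; each statement's English description precedes it below -/
import Mathlib

section
/- A function f : B(0,r) → ℍ on the Euclidean ball B(0,r) = {q ∈ ℍ : |q| < r} is slice regular if and only if there exists a sequence (a_n) of quaternions such that f(q) = Σ_{n=0}^∞ qⁿ a_n for all q ∈ B(0,r), the series converging uniformly on compact subsets of B(0,r); in that case a_n = (1/n!) ∂ⁿf/∂xⁿ(0). -/
open MeasureTheory Filter Set
open scoped ENNReal

noncomputable section

notation "ℍ" => Quaternion ℝ

instance : MeasurableSpace ℍ := borel ℍ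
instance : BorelSpace ℍ := ⟨rfl⟩

/-- The 2-sphere `𝕊` of imaginary units of `ℍ`. -/
def Sph : Set ℍ := {q | q ^ 2 = -1}

/-- The point `x + I y` of the slice `ℂ_I`, for `z = (x, y)`. -/
def toSlice (I : ℍ) (z : ℝ × ℝ) : ℍ := (z.1 : ℍ) + z.2 • I

/-- The slice (complex plane) `ℂ_I = {x + I y : x, y ∈ ℝ}`. -/
def CPlane (I : ℍ) : Set ℍ := Set.range (toSlice I)

/-- `f` is (left) slice regular on the open set `U ⊆ ℍ`: it is real differentiable on `U`
and for every imaginary unit `I` its restriction to `U ∩ ℂ_I` satisfies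
`(∂/∂x + I ∂/∂y) f(x + I y) = 0`. -/
def SliceRegularOn (f : ℍ → ℍ) (U : Set ℍ) : Prop :=
  (∀ q ∈ U, DifferentiableAt ℝ f q) ∧
  ∀ I ∈ Sph, ∀ q ∈ U ∩ CPlane I, fderiv ℝ f q 1 + I * fderiv ℝ f q I = 0

/-- `f` is holomorphic on the slice `U ∩ ℂ_J`: it is real differentiable there (as a function of
the slice coordinates `(x,y)`) and satisfies `(∂/∂x + J ∂/∂y) f(x + J y) = 0`. -/
def HolOnSlice (f : ℍ → ℍ) (J : ℍ) (U : Set ℍ) : Prop :=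
  ∀ z : ℝ × ℝ, toSlice J z ∈ U →
    DifferentiableAt ℝ (fun w => f (toSlice J w)) z ∧
    fderiv ℝ (fun w => f (toSlice J w)) z (1, 0)
      + J * fderiv ℝ (fun w => f (toSlice J w)) z (0, 1) = 0

/-- Axially symmetric subset of `ℍ`. -/
def AxSymm (U : Set ℍ) : Prop :=
  ∀ x y : ℝ, ∀ I ∈ Sph, (x : ℍ) + y • I ∈ U → ∀ J ∈ Sph, (x : ℍ) + y • J ∈ U

/-- s-domain: a domain whose intersection with every slice `ℂ_I` is connected. -/
def IsSDomain (U : Set ℍ) : Prop :=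
  IsOpen U ∧ IsConnected U ∧ ∀ I ∈ Sph, IsConnected (U ∩ CPlane I)

/-- The open unit ball `𝔹` of `ℍ`. -/
def B1 : Set ℍ := Metric.ball 0 1

/-- The point `r e^{Iθ} = r cos θ + (r sin θ) I`. -/
def circleQ (I : ℍ) (r θ : ℝ) : ℍ := ((r * Real.cos θ : ℝ) : ℍ) + (r * Real.sin θ) • I

/-- `∫_0^{2π} |f(r e^{Iθ})|^p dθ`. -/
def circIntP (f : ℍ → ℍ) (p : ℝ) (I : ℍ) (r : ℝ) : ℝ :=
  ∫ θ in (0:ℝ)..(2 * Real.pi), ‖f (circleQ I r θ)‖ ^ p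

/-- Membership in the Hardy space `H^p(𝔹)`: `f` is slice regular on `𝔹` and the limits as
`r → 1⁻` of `∫_0^{2π} |f(r e^{Iθ})|^p dθ` exist and are uniformly bounded over `I ∈ 𝕊`. -/
def HardyMem (f : ℍ → ℍ) (p : ℝ) : Prop :=
  SliceRegularOn f B1 ∧ ∃ M : ℝ, ∀ I ∈ Sph, ∃ L : ℝ, L ≤ M ∧
    Tendsto (fun r => circIntP f p I r) (nhdsWithin 1 (Set.Iio 1)) (nhds L)

/-- `∥f∥_p^p = sup_{I ∈ 𝕊} lim_{r→1⁻} ∫_0^{2π} |f(r e^{Iθ})|^p dθ`. -/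
def hardyNormP (f : ℍ → ℍ) (p : ℝ) : ℝ :=
  sSup {L | ∃ I ∈ Sph, Tendsto (fun r => circIntP f p I r) (nhdsWithin 1 (Set.Iio 1)) (nhds L)}

/-- `μ` is a Carleson measure for `H^p(𝔹)`. -/
def IsCarlesonHardy (μ : Measure ℍ) (p : ℝ) : Prop :=
  ∃ C : ℝ, 0 < C ∧ ∀ f : ℍ → ℍ, HardyMem f p →
    ∫⁻ q in B1, ENNReal.ofReal (‖f q‖ ^ p) ∂μ ≤ ENNReal.ofReal (C * hardyNormP f p)

/-- `μ` is a slice Carleson measure for `H^p(𝔹)`: for every `I ∈ 𝕊`, the restriction `μ_I`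
of `μ` to `𝔹_I = 𝔹 ∩ ℂ_I` satisfies the Carleson inequality. -/
def IsSliceCarlesonHardy (μ : Measure ℍ) (p : ℝ) : Prop :=
  ∃ C : ℝ, 0 < C ∧ ∀ I ∈ Sph, ∀ f : ℍ → ℍ, HardyMem f p →
    ∫⁻ q in B1 ∩ CPlane I, ENNReal.ofReal (‖f q‖ ^ p) ∂μ ≤ ENNReal.ofReal (C * hardyNormP f p)

/-- The Carleson box `S_I(θ₀, r) ⊆ 𝔹_I`. -/
def carlesonBox (I : ℍ) (θ₀ r : ℝ) : Set ℍ :=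
  {q | ∃ ρ θ : ℝ, r ≤ ρ ∧ ρ < 1 ∧ |θ - θ₀| ≤ 1 - r ∧ q = circleQ I ρ θ}

/-- The symmetric box `S(θ₀, r) = ⋃_{I ∈ 𝕊} S_I(θ₀, r)`. -/
def symmBox (θ₀ r : ℝ) : Set ℍ := ⋃ I ∈ Sph, carlesonBox I θ₀ r

/-- The open unit disc of `ℝ²` (parametrizing `𝔹_I`). -/
def unitDisc2 : Set (ℝ × ℝ) := {z | z.1 ^ 2 + z.2 ^ 2 < 1}

/-- `∫_{𝔹_I} |f|^p dλ`, `λ` the 2-dimensional Lebesgue measure on `ℂ_I`. -/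
def sliceIntP (f : ℍ → ℍ) (p : ℝ) (I : ℍ) : ℝ≥0∞ :=
  ∫⁻ z in unitDisc2, ENNReal.ofReal (‖f (toSlice I z)‖ ^ p)

/-- `∥f∥_{𝒜^p}^p = sup_{I ∈ 𝕊} ∫_{𝔹_I} |f|^p dλ`. -/
def bergNormP (f : ℍ → ℍ) (p : ℝ) : ℝ≥0∞ := ⨆ I ∈ Sph, sliceIntP f p I

/-- Membership in the Bergman space `𝒜^p(𝔹)`. -/
def BergMem (f : ℍ → ℍ) (p : ℝ) : Prop := SliceRegularOn f B1 ∧ bergNormP f p < ⊤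

/-- `μ` is a Carleson measure for `𝒜^p(𝔹)`. -/
def IsCarlesonBerg (μ : Measure ℍ) (p : ℝ) : Prop :=
  ∃ C : ℝ, 0 < C ∧ ∀ f : ℍ → ℍ, BergMem f p →
    ∫⁻ q in B1, ENNReal.ofReal (‖f q‖ ^ p) ∂μ ≤ ENNReal.ofReal C * bergNormP f p

/-- `μ` is a slice Carleson measure for `𝒜^p(𝔹)`. -/
def IsSliceCarlesonBerg (μ : Measure ℍ) (p : ℝ) : Prop :=
  ∃ C : ℝ, 0 < C ∧ ∀ I ∈ Sph, ∀ f : ℍ → ℍ, BergMem f p →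
    ∫⁻ q in B1 ∩ CPlane I, ENNReal.ofReal (‖f q‖ ^ p) ∂μ ≤ ENNReal.ofReal C * bergNormP f p

/-- The pseudohyperbolic distance
`ρ(q,α) = |(1 − 2Re(α)q + |α|²q²)⁻¹ (−α + q(1+α²) − q²α)| = |(1 − qᾱ)^{−*} * (q − α)|`. -/
def pRho (q α : ℍ) : ℝ :=
  ‖(1 - (2 * α.re) • q + (‖α‖ ^ 2) • q ^ 2)⁻¹ * (-α + q * (1 + α ^ 2) - q ^ 2 * α)‖

/-- The pseudohyperbolic ball `B(α, r)`. -/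
def pBall (α : ℍ) (r : ℝ) : Set ℍ := {q ∈ B1 | pRho q α < r}

/-- The pseudohyperbolic disc `Δ_I(α,r) = {z ∈ 𝔹_I : |z − α| < r |1 − zᾱ|}`. -/
def pDisc (I : ℍ) (α : ℍ) (r : ℝ) : Set ℍ :=
  {z | z ∈ B1 ∧ z ∈ CPlane I ∧ ‖z - α‖ < r * ‖1 - z * star α‖}

/-- The axially symmetric completion of a set `S ⊆ ℍ`. -/
def axComp (S : Set ℍ) : Set ℍ := {q | ∃ s ∈ S, q.re = s.re ∧ ‖q.im‖ = ‖s.im‖}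

/-- The 2-dimensional Lebesgue area, on the slice `ℂ_I`, of a subset of `ℂ_I`. -/
def sliceArea (I : ℍ) (S : Set ℍ) : ℝ≥0∞ := volume (toSlice I ⁻¹' S)

/-- The 4-dimensional Lebesgue measure on `ℍ ≅ ℝ⁴`. -/
def quatVol : Measure ℍ :=
  Measure.map (fun p : ℝ × ℝ × ℝ × ℝ => (⟨p.1, p.2.1, p.2.2.1, p.2.2.2⟩ : ℍ)) volume

/-- The 4-dimensional Lebesgue measure `η`, normalized so that `η(𝔹) = 1`. -/
def etaMeasure : Measure ℍ := (quatVol B1)⁻¹ • quatVol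

/-- The 2-sphere `[α]` of points with the same real part and the same modulus as `α`. -/
def qSphere (α : ℍ) : Set ℍ := {q | ∃ J ∈ Sph, q = (α.re : ℍ) + ‖α.im‖ • J}

/-- The 2-dimensional Lebesgue measure of the slice `ℂ_i`, restricted to `𝔹`,
regarded as a Borel measure on `ℍ`. -/
def sliceLeb (i : ℍ) : Measure ℍ := (Measure.map (toSlice i) volume).restrict B1

/-!
On a slice `ℂ_I`, left multiplication by `ℂ_I ≅ ℂ` makes `ℍ` a complex Banach space, and the
Cauchy–Riemann condition defining slice regularity says exactly that `f ∘ φ_I` is complex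
differentiable for this structure. So on `ℂ_I ∩ B(0,r)` the function `f` is the sum of the
Taylor series `Σ φ_I(z)ⁿ cₙ` of a holomorphic function. On the real axis, which lies in every
slice, uniqueness of real power series identifies `cₙ` with `(1/n!) ∂ⁿf/∂xⁿ(0)`; the coefficients
therefore do not depend on `I`, and the expansion holds on all of `B(0,r) = ⋃_I ℂ_I ∩ B(0,r)`.

Conversely, a series `Σ qⁿ aₙ` converging on the ball is a real power series in `q`, hence real
analytic and locally uniformly convergent, and on each slice it is a complex power series for the
structure above, hence satisfies the Cauchy–Riemann condition.
-/

open Filter Metric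
open scoped Nat

section PowerSeriesOfCoeff

variable (𝕜 : Type*) {E : Type*} [RCLike 𝕜] [NormedAddCommGroup E] [NormedSpace 𝕜 E]

def powerSeriesOfCoeff (c : ℕ → E) : FormalMultilinearSeries 𝕜 𝕜 E :=
  fun n => ContinuousMultilinearMap.mkPiRing 𝕜 (Fin n) (c n)

variable {𝕜}

@[simp] theorem coeff_powerSeriesOfCoeff (c : ℕ → E) (n : ℕ) :
    (powerSeriesOfCoeff 𝕜 c).coeff n = c n := by
  simp [powerSeriesOfCoeff, FormalMultilinearSeries.coeff]

theorem le_radius_powerSeriesOfCoeff {c : ℕ → E} {r : ℝ}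
    (hc : ∀ w : 𝕜, ‖w‖ < r → Summable fun n => w ^ n • c n) :
    ENNReal.ofReal r ≤ (powerSeriesOfCoeff 𝕜 c).radius := by
  refine ENNReal.le_of_forall_nnreal_lt fun t ht => ?_
  have htr : (t : ℝ) < r := by
    rw [← ENNReal.ofReal_coe_nnreal, ENNReal.ofReal_lt_ofReal_iff'] at ht
    exact ht.1
  refine (powerSeriesOfCoeff 𝕜 c).le_radius_of_tendsto (l := 0) ?_
  have := (hc ((t : ℝ) : 𝕜) (by simpa using htr)).tendsto_atTop_zero.norm
  simpa [norm_smul, mul_comm] using this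

theorem hasFPowerSeriesOnBall_powerSeriesOfCoeff {g : 𝕜 → E} {c : ℕ → E} {r : ℝ} (hr : 0 < r)
    (hc : ∀ w : 𝕜, ‖w‖ < r → HasSum (fun n => w ^ n • c n) (g w)) :
    HasFPowerSeriesOnBall g (powerSeriesOfCoeff 𝕜 c) 0 (ENNReal.ofReal r) where
  r_le := le_radius_powerSeriesOfCoeff fun w hw => (hc w hw).summable
  r_pos := ENNReal.ofReal_pos.2 hr
  hasSum {w} hw := by
    rw [eball_ofReal, mem_ball_zero_iff] at hw
    simpa using hc w hw

theorem eq_inv_factorial_smul_iteratedDeriv_of_hasSum [CompleteSpace E] {g : 𝕜 → E}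
    {c : ℕ → E} {r : ℝ} (hr : 0 < r)
    (hc : ∀ w : 𝕜, ‖w‖ < r → HasSum (fun n => w ^ n • c n) (g w)) (n : ℕ) :
    c n = (n ! : 𝕜)⁻¹ • iteratedDeriv n g 0 := by
  have h := (hasFPowerSeriesOnBall_powerSeriesOfCoeff hr hc).factorial_smul 1 n
  rw [FormalMultilinearSeries.apply_eq_pow_smul_coeff, coeff_powerSeriesOfCoeff, one_pow,
    one_smul, ← iteratedDeriv_eq_iteratedFDeriv] at h
  rw [← h, ← Nat.cast_smul_eq_nsmul 𝕜, smul_smul,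
    inv_mul_cancel₀ (Nat.cast_ne_zero.2 n.factorial_ne_zero), one_smul]

end PowerSeriesOfCoeff

section RightPowerSeries

variable (𝕜 : Type*) {A : Type*} [RCLike 𝕜] [NormedRing A] [NormedAlgebra 𝕜 A]

def rightPowerSeries (a : ℕ → A) : FormalMultilinearSeries 𝕜 A A :=
  fun n => ((ContinuousLinearMap.mul 𝕜 A).flip (a n)).compContinuousMultilinearMap
    (ContinuousMultilinearMap.mkPiAlgebraFin 𝕜 n A)

variable {𝕜}

@[simp] theorem rightPowerSeries_apply_diag (a : ℕ → A) (n : ℕ) (q : A) :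
    rightPowerSeries 𝕜 a n (fun _ => q) = q ^ n * a n := by
  simp [rightPowerSeries, List.prod_replicate]

theorem norm_rightPowerSeries_le [NormOneClass A] (a : ℕ → A) (n : ℕ) :
    ‖rightPowerSeries 𝕜 a n‖ ≤ ‖a n‖ :=
  calc ‖rightPowerSeries 𝕜 a n‖
      ≤ ‖(ContinuousLinearMap.mul 𝕜 A).flip (a n)‖ *
          ‖ContinuousMultilinearMap.mkPiAlgebraFin 𝕜 n A‖ :=
        ContinuousLinearMap.norm_compContinuousMultilinearMap_le _ _
    _ ≤ ‖a n‖ := by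
        rw [ContinuousMultilinearMap.norm_mkPiAlgebraFin, mul_one]
        exact ContinuousLinearMap.opNorm_le_bound _ (norm_nonneg _) fun q => by
          simpa [mul_comm] using norm_mul_le q (a n)

variable [NormOneClass A] {f : A → A} {a : ℕ → A} {r : ℝ}

theorem hasSum_pow_smul_of_hasSum_pow_mul
    (ha : ∀ q ∈ ball (0 : A) r, HasSum (fun n => q ^ n * a n) (f q)) (w : 𝕜) (hw : ‖w‖ < r) :
    HasSum (fun n => w ^ n • a n) (f (algebraMap 𝕜 A w)) := by
  simpa [Algebra.smul_def] using ha (algebraMap 𝕜 A w) (by simpa using hw)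

theorem hasFPowerSeriesOnBall_rightPowerSeries (hr : 0 < r)
    (ha : ∀ q ∈ ball (0 : A) r, HasSum (fun n => q ^ n * a n) (f q)) :
    HasFPowerSeriesOnBall f (rightPowerSeries 𝕜 a) 0 (ENNReal.ofReal r) where
  r_le := (le_radius_powerSeriesOfCoeff (𝕜 := 𝕜) fun w hw =>
      (hasSum_pow_smul_of_hasSum_pow_mul ha w hw).summable).trans
    (FormalMultilinearSeries.radius_le_of_le fun n => by
      simpa using norm_rightPowerSeries_le (𝕜 := 𝕜) a n)
  r_pos := ENNReal.ofReal_pos.2 hr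
  hasSum {q} hq := by
    rw [eball_ofReal] at hq
    simpa using ha q hq

theorem differentiableAt_of_hasSum_pow_mul [NormedAlgebra ℝ A] [CompleteSpace A]
    (ha : ∀ q ∈ ball (0 : A) r, HasSum (fun n => q ^ n * a n) (f q)) {q : A}
    (hq : q ∈ ball 0 r) : DifferentiableAt ℝ f q :=
  ((hasFPowerSeriesOnBall_rightPowerSeries (𝕜 := ℝ) (pos_of_mem_ball hq) ha).analyticAt_of_mem
    (by rwa [eball_ofReal])).differentiableAt

theorem tendstoUniformlyOn_of_hasSum_pow_mul [NormedAlgebra ℝ A]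
    (ha : ∀ q ∈ ball (0 : A) r, HasSum (fun n => q ^ n * a n) (f q)) {K : Set A}
    (hK : K ⊆ ball 0 r) (hKc : IsCompact K) :
    TendstoUniformlyOn (fun N q => ∑ n ∈ Finset.range N, q ^ n * a n) f atTop K := by
  rcases K.eq_empty_or_nonempty with rfl | ⟨q, hq⟩
  · exact tendstoUniformlyOn_empty
  have h := (hasFPowerSeriesOnBall_rightPowerSeries (𝕜 := ℝ) (pos_of_mem_ball (hK hq))
    ha).tendstoLocallyUniformlyOn
  rw [eball_ofReal] at h
  simpa [FormalMultilinearSeries.partialSum] using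
    (tendstoLocallyUniformlyOn_iff_tendstoUniformlyOn_of_compact hKc).1 (h.mono hK)

end RightPowerSeries

section Slices

variable {I : ℍ}

theorem mul_self_of_mem_Sph (hI : I ∈ Sph) : I * I = -1 := (sq I).symm.trans hI

theorem mem_Sph_iff : I ∈ Sph ↔ I.re = 0 ∧ Quaternion.normSq I = 1 := by
  refine ⟨fun hI => ?_, fun ⟨hre, hn⟩ => ?_⟩
  · have hn : Quaternion.normSq I = 1 := by
      have h := congrArg norm (show I ^ 2 = -1 from hI)
      rw [norm_pow, norm_neg, norm_one, sq] at h
      rw [Quaternion.normSq_eq_norm_mul_self, h]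
    refine ⟨Quaternion.sq_eq_neg_normSq.1 ?_, hn⟩
    rw [show I ^ 2 = -1 from hI, hn, Quaternion.coe_one]
  · show I ^ 2 = -1
    rw [Quaternion.sq_eq_neg_normSq.2 hre, hn, Quaternion.coe_one]

def sliceEmb (hI : I ∈ Sph) : ℂ →ₐ[ℝ] ℍ := Complex.liftAux I (mul_self_of_mem_Sph hI)

theorem sliceEmb_apply (hI : I ∈ Sph) (z : ℂ) : sliceEmb hI z = toSlice I (z.re, z.im) := rfl

@[simp] theorem sliceEmb_I (hI : I ∈ Sph) : sliceEmb hI Complex.I = I :=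
  Complex.liftAux_apply_I _ _

@[simp] theorem sliceEmb_ofReal (hI : I ∈ Sph) (x : ℝ) : sliceEmb hI x = x :=
  (sliceEmb hI).commutes x

theorem star_sliceEmb (hI : I ∈ Sph) (z : ℂ) :
    star (sliceEmb hI z) = sliceEmb hI (starRingEnd ℂ z) := by
  simp [sliceEmb, Complex.liftAux_apply, Quaternion.star_eq_neg.2 ((mem_Sph_iff.1 hI).1)]

theorem norm_sliceEmb (hI : I ∈ Sph) (z : ℂ) : ‖sliceEmb hI z‖ = ‖z‖ := by
  have h : Quaternion.normSq (sliceEmb hI z) = Complex.normSq z := by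
    apply Quaternion.coe_injective
    rw [← Quaternion.self_mul_star, star_sliceEmb, ← map_mul, Complex.mul_conj, sliceEmb_ofReal]
  rw [Quaternion.normSq_eq_norm_mul_self, Complex.normSq_eq_norm_sq, ← sq] at h
  exact (sq_eq_sq₀ (norm_nonneg _) (norm_nonneg _)).1 h

theorem exists_sliceEmb_eq (q : ℍ) : ∃ I, ∃ hI : I ∈ Sph, ∃ z : ℂ, sliceEmb hI z = q := by
  by_cases h : q.im = 0
  · refine ⟨(Quaternion.equivProd ℝ).symm (0, 1, 0, 0),
      by simp [mem_Sph_iff, Quaternion.normSq_def'], q.re, ?_⟩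
    rw [sliceEmb_ofReal]
    conv_rhs => rw [← Quaternion.re_add_im q, h, add_zero]
  · have hn : ‖q.im‖ ≠ 0 := norm_ne_zero_iff.2 h
    have hI : ‖q.im‖⁻¹ • q.im ∈ Sph := by
      refine mem_Sph_iff.2 ⟨by simp, ?_⟩
      rw [Quaternion.normSq_smul, Quaternion.normSq_eq_norm_mul_self, ← sq, ← mul_pow,
        inv_mul_cancel₀ hn, one_pow]
    refine ⟨_, hI, ⟨q.re, ‖q.im‖⟩, ?_⟩
    rw [sliceEmb_apply, toSlice, smul_smul, mul_inv_cancel₀ hn, one_smul, Quaternion.re_add_im]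

abbrev sliceNormedSpace (hI : I ∈ Sph) : NormedSpace ℂ ℍ where
  toModule := Module.compHom ℍ (sliceEmb hI).toRingHom
  norm_smul_le z q := by
    change ‖sliceEmb hI z * q‖ ≤ ‖z‖ * ‖q‖
    rw [norm_mul, norm_sliceEmb]

theorem sliceNormedSpace_smul (hI : I ∈ Sph) (z : ℂ) (q : ℍ) :
    (letI := sliceNormedSpace hI; z • q) = sliceEmb hI z * q := rfl

theorem sliceNormedSpace_isScalarTower (hI : I ∈ Sph) :
    letI := sliceNormedSpace hI; IsScalarTower ℝ ℂ ℍ :=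
  letI := sliceNormedSpace hI
  ⟨fun x z q => by
    rw [sliceNormedSpace_smul, sliceNormedSpace_smul, map_smul, smul_mul_assoc]⟩

theorem apply_sliceEmb_of_apply_eq_mul (hI : I ∈ Sph) {L : ℍ →L[ℝ] ℍ} (hL : L I = I * L 1)
    (w : ℂ) : L (sliceEmb hI w) = sliceEmb hI w * L 1 := by
  rw [sliceEmb, Complex.liftAux_apply, Algebra.algebraMap_eq_smul_one, map_add, map_smul,
    map_smul, hL, add_mul, smul_mul_assoc, smul_mul_assoc, one_mul]

theorem cauchyRiemann_iff_apply_eq_mul (hI : I ∈ Sph) (L : ℍ →L[ℝ] ℍ) :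
    L 1 + I * L I = 0 ↔ L I = I * L 1 := by
  have hII := mul_self_of_mem_Sph hI
  constructor
  · intro h
    have h' := congrArg (I * ·) h
    simp only [mul_add, ← mul_assoc, hII, neg_one_mul, mul_zero] at h'
    exact (add_neg_eq_zero.1 h').symm
  · intro h
    rw [h, ← mul_assoc, hII, neg_one_mul, add_neg_cancel]

theorem differentiableAt_comp_sliceEmb_iff {f : ℍ → ℍ} (hI : I ∈ Sph) {z : ℂ}
    (hf : DifferentiableAt ℝ f (sliceEmb hI z)) :
    letI := sliceNormedSpace hI
    DifferentiableAt ℂ (f ∘ sliceEmb hI) z ↔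
      fderiv ℝ f (sliceEmb hI z) 1 + I * fderiv ℝ f (sliceEmb hI z) I = 0 := by
  let := sliceNormedSpace hI
  have := sliceNormedSpace_isScalarTower hI
  set L := fderiv ℝ f (sliceEmb hI z)
  have hcomp : HasFDerivAt (f ∘ sliceEmb hI)
      (L.comp (sliceEmb hI).toLinearMap.toContinuousLinearMap) z :=
    hf.hasFDerivAt.comp z (sliceEmb hI).toLinearMap.toContinuousLinearMap.hasFDerivAt
  rw [cauchyRiemann_iff_apply_eq_mul hI]
  constructor
  · intro hg
    have hD := (hg.hasFDerivAt.restrictScalars ℝ).unique hcomp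
    have h1 := congrArg (fun T : ℂ →L[ℝ] ℍ => T 1) hD
    have hi := congrArg (fun T : ℂ →L[ℝ] ℍ => T Complex.I) hD
    simp only [ContinuousLinearMap.coe_restrictScalars', fderiv_eq_smul_deriv, one_smul,
      ContinuousLinearMap.comp_apply, LinearMap.coe_toContinuousLinearMap',
      AlgHom.toLinearMap_apply, map_one, sliceEmb_I] at h1 hi
    rw [← hi, ← h1, sliceNormedSpace_smul, sliceEmb_I]
  · intro hL
    refine (hasFDerivAt_of_restrictScalars ℝ hcomp
      (f' := (ContinuousLinearMap.id ℂ ℂ).smulRight (L 1)) ?_).differentiableAt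
    refine ContinuousLinearMap.ext fun w => ?_
    simp [sliceNormedSpace_smul, apply_sliceEmb_of_apply_eq_mul hI hL]

end Slices

section SliceRegular

variable {f : ℍ → ℍ} {r : ℝ} {I : ℍ}

theorem SliceRegularOn.differentiableOn_comp_sliceEmb (hf : SliceRegularOn f (ball 0 r))
    (hI : I ∈ Sph) :
    letI := sliceNormedSpace hI
    DifferentiableOn ℂ (f ∘ sliceEmb hI) (ball 0 r) := by
  let := sliceNormedSpace hI
  intro z hz
  have hq : sliceEmb hI z ∈ ball (0 : ℍ) r := by
    rwa [mem_ball_zero_iff, norm_sliceEmb, ← mem_ball_zero_iff]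
  exact ((differentiableAt_comp_sliceEmb_iff hI (hf.1 _ hq)).2
    (hf.2 I hI _ ⟨hq, _, (sliceEmb_apply hI z).symm⟩)).differentiableWithinAt

theorem SliceRegularOn.exists_hasSum_on_slice (hf : SliceRegularOn f (ball 0 r)) (hI : I ∈ Sph) :
    ∃ c : ℕ → ℍ, ∀ z : ℂ, ‖z‖ < r →
      HasSum (fun n => sliceEmb hI z ^ n * c n) (f (sliceEmb hI z)) := by
  let := sliceNormedSpace hI
  refine ⟨fun n => (n ! : ℂ)⁻¹ • iteratedDeriv n (f ∘ sliceEmb hI) 0, fun z hz => ?_⟩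
  have h := Complex.hasSum_taylorSeries_on_ball (hf.differentiableOn_comp_sliceEmb hI)
    (mem_ball_zero_iff.2 hz)
  have hterm : ∀ n : ℕ, (n ! : ℂ)⁻¹ • (z - 0) ^ n • iteratedDeriv n (f ∘ sliceEmb hI) 0 =
      sliceEmb hI z ^ n * ((n ! : ℂ)⁻¹ • iteratedDeriv n (f ∘ sliceEmb hI) 0) := fun n => by
    rw [sub_zero, smul_smul, mul_comm, ← smul_smul, sliceNormedSpace_smul, map_pow]
  simp only [hterm] at h
  exact h

theorem SliceRegularOn.hasSum (hf : SliceRegularOn f (ball 0 r)) {q : ℍ} (hq : q ∈ ball 0 r) :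
    HasSum (fun n => q ^ n * ((n ! : ℝ)⁻¹ • iteratedDeriv n (fun x : ℝ => f x) 0)) (f q) := by
  obtain ⟨I, hI, z, rfl⟩ := exists_sliceEmb_eq q
  obtain ⟨c, hc⟩ := hf.exists_hasSum_on_slice hI
  have hreal : ∀ x : ℝ, ‖x‖ < r → HasSum (fun n => x ^ n • c n) (f x) := fun x hx => by
    have h := hc x (by simpa using hx)
    rw [sliceEmb_ofReal] at h
    simpa only [← Quaternion.coe_pow, Quaternion.coe_mul_eq_smul] using h
  have hcoeff : c = fun n => (n ! : ℝ)⁻¹ • iteratedDeriv n (fun x : ℝ => f x) 0 :=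
    funext (eq_inv_factorial_smul_iteratedDeriv_of_hasSum (pos_of_mem_ball hq) hreal)
  subst hcoeff
  exact hc z (by rwa [← norm_sliceEmb hI, ← mem_ball_zero_iff])

theorem sliceRegularOn_of_hasSum {a : ℕ → ℍ}
    (ha : ∀ q ∈ ball (0 : ℍ) r, HasSum (fun n => q ^ n * a n) (f q)) :
    SliceRegularOn f (ball 0 r) := by
  refine ⟨fun q hq => differentiableAt_of_hasSum_pow_mul ha hq, ?_⟩
  rintro I hI _ ⟨hq, ⟨x, y⟩, rfl⟩
  let := sliceNormedSpace hI
  have hslice : ∀ w : ℂ, ‖w‖ < r → HasSum (fun n => w ^ n • a n) ((f ∘ sliceEmb hI) w) :=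
    fun w hw => by
      simpa [sliceNormedSpace_smul] using ha _ (by rwa [mem_ball_zero_iff, norm_sliceEmb])
  rw [← sliceEmb_apply hI ⟨x, y⟩] at hq ⊢
  refine (differentiableAt_comp_sliceEmb_iff hI (differentiableAt_of_hasSum_pow_mul ha hq)).1 ?_
  refine ((hasFPowerSeriesOnBall_powerSeriesOfCoeff (pos_of_mem_ball hq) hslice).analyticAt_of_mem
    ?_).differentiableAt
  rwa [eball_ofReal, mem_ball_zero_iff, ← norm_sliceEmb hI, ← mem_ball_zero_iff]

end SliceRegular

/-- A function on the Euclidean ball `B(0,r) ⊆ ℍ` is slice regular if and only if it is the sum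
of a power series `Σ qⁿ aₙ` converging uniformly on compact subsets of the ball; in that case
`aₙ = (1/n!) ∂ⁿf/∂xⁿ(0)`. -/
theorem power_series_representation (r : ℝ) (hr : 0 < r) (f : ℍ → ℍ) :
    (SliceRegularOn f (Metric.ball 0 r) ↔
      ∃ a : ℕ → ℍ,
        (∀ q ∈ Metric.ball (0 : ℍ) r, HasSum (fun n => q ^ n * a n) (f q)) ∧
        (∀ K ⊆ Metric.ball (0 : ℍ) r, IsCompact K →
          TendstoUniformlyOn (fun N q => ∑ n ∈ Finset.range N, q ^ n * a n) f atTop K)) ∧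
    (SliceRegularOn f (Metric.ball 0 r) →
      ∀ a : ℕ → ℍ, (∀ q ∈ Metric.ball (0 : ℍ) r, HasSum (fun n => q ^ n * a n) (f q)) →
        ∀ n : ℕ, a n = ((n.factorial : ℝ))⁻¹ • iteratedDeriv n (fun x : ℝ => f (x : ℍ)) 0) := by
  refine ⟨⟨fun hf => ?_, fun ⟨a, ha, _⟩ => sliceRegularOn_of_hasSum ha⟩, fun _ a ha => ?_⟩
  · have hsum := fun q (hq : q ∈ ball (0 : ℍ) r) => hf.hasSum hq
    exact ⟨_, hsum, fun K hK hKc => tendstoUniformlyOn_of_hasSum_pow_mul hsum hK hKc⟩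
  · exact eq_inv_factorial_smul_iteratedDeriv_of_hasSum hr (hasSum_pow_smul_of_hasSum_pow_mul ha)
end
end

section
/- Representation Formula: Let f be a slice regular function on an axially symmetric s-domain U ⊆ ℍ, let J ∈ 𝕊, and suppose x ± Jy ∈ U ∩ ℂ_J. Then for every I ∈ 𝕊 one has f(x + Iy) = ½[f(x + Jy) + f(x − Jy)] + I·½[J(f(x − Jy) − f(x + Jy))] = ½(1 − IJ) f(x + Jy) + ½(1 + IJ) f(x − Jy). -/
open MeasureTheory Filter Set
open scoped ENNReal

noncomputable section

/-!
Fix `I ∈ 𝕊` and put `V = {z ∈ ℂ : Re z + J Im z ∈ U}`. By axial symmetry `J` may be replaced by any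
`K ∈ 𝕊` here, so `V` is stable under conjugation (take `K = -J`), and `V` is connected because
`U ∩ ℂ_J` is; hence `V` meets the real axis. For `K ∈ 𝕊` the map `z ↦ f(Re z + K Im z)` satisfies
`∂/∂y = K ∂/∂x` on `V`, and left multiplication by `c` with `c K = I c` turns this into
`∂/∂y = I ∂/∂x`. The coefficients `½(1 - IJ)` and `½(1 + IJ) = ½(1 - I(-J))` have this property for
`K = J` and `K = -J` and sum to `1`, so both sides of the formula are holomorphic for the complex
structure on `ℍ` given by left multiplication by `ℂ_I`, and they agree on the real points of `V`.
The identity theorem finishes the proof.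
-/

open Topology

lemma mul_self_of_mem_sph {I : ℍ} (hI : I ∈ Sph) : I * I = -1 := by
  rw [← sq]; exact hI

lemma neg_mem_sph {I : ℍ} (hI : I ∈ Sph) : -I ∈ Sph := by
  show (-I) ^ 2 = -1
  rw [neg_sq]; exact hI

lemma mem_sph_iff {I : ℍ} : I ∈ Sph ↔ I.re = 0 ∧ Quaternion.normSq I = 1 := by
  refine ⟨fun hI => ?_, fun ⟨hre, hn⟩ => ?_⟩
  · have hsq : Quaternion.normSq I ^ 2 = 1 := by
      rw [← map_pow, show I ^ 2 = -1 from hI, Quaternion.normSq_neg, map_one]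
    have hn := (pow_eq_one_iff_of_nonneg Quaternion.normSq_nonneg two_ne_zero).1 hsq
    exact ⟨Quaternion.sq_eq_neg_normSq.1 (by rw [hn]; exact hI), hn⟩
  · show I ^ 2 = -1
    rw [Quaternion.sq_eq_neg_normSq.2 hre, hn, Quaternion.coe_one]

def sliceMap (I : ℍ) : ℂ →L[ℝ] ℍ := Complex.reCLM.smulRight 1 + Complex.imCLM.smulRight I

@[simp]
lemma sliceMap_apply (I : ℍ) (z : ℂ) : sliceMap I z = z.re + z.im • I := by
  simp [sliceMap, ← Quaternion.coe_mul_eq_smul]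

lemma norm_sliceMap {I : ℍ} (hI : I ∈ Sph) (z : ℂ) : ‖sliceMap I z‖ = ‖z‖ := by
  obtain ⟨hre, hn⟩ := mem_sph_iff.1 hI
  have h : Quaternion.normSq (sliceMap I z) = Complex.normSq z := by
    rw [sliceMap_apply, Quaternion.normSq_add, Quaternion.normSq_coe, Quaternion.normSq_smul, hn,
      Quaternion.coe_mul_eq_smul, Complex.normSq_apply]
    simp [hre, sq]
  rw [Quaternion.normSq_eq_norm_mul_self, Complex.normSq_eq_norm_sq, sq] at h
  exact (mul_self_inj (norm_nonneg _) (norm_nonneg _)).1 h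

lemma sliceMap_ofReal (I : ℍ) (t : ℝ) : sliceMap I t = t := by simp

lemma sliceMap_conj (I : ℍ) (z : ℂ) : sliceMap I (starRingEnd ℂ z) = sliceMap (-I) z := by
  simp

lemma range_sliceMap (I : ℍ) : range (sliceMap I) = CPlane I := by
  ext q
  constructor
  · rintro ⟨z, rfl⟩; exact ⟨(z.re, z.im), by simp [toSlice]⟩
  · rintro ⟨p, rfl⟩; exact ⟨⟨p.1, p.2⟩, by simp [toSlice]⟩

lemma AxSymm.preimage_sliceMap_eq {U : Set ℍ} (hU : AxSymm U) {I J : ℍ} (hI : I ∈ Sph)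
    (hJ : J ∈ Sph) : sliceMap I ⁻¹' U = sliceMap J ⁻¹' U := by
  ext z
  simp only [mem_preimage, sliceMap_apply]
  exact ⟨fun h => hU _ _ I hI h J hJ, fun h => hU _ _ J hJ h I hI⟩

lemma isPreconnected_preimage_sliceMap {U : Set ℍ} {I : ℍ} (hI : I ∈ Sph)
    (hU : IsPreconnected (U ∩ CPlane I)) : IsPreconnected (sliceMap I ⁻¹' U) := by
  have hemb : IsEmbedding (sliceMap I) :=
    (AddMonoidHomClass.isometry_iff_norm _).2 (norm_sliceMap hI) |>.isEmbedding
  rwa [← hemb.isInducing.isPreconnected_image, image_preimage_eq_inter_range,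
    range_sliceMap]

lemma IsPreconnected.exists_ofReal_mem {V : Set ℂ} (hV : IsPreconnected V) {z : ℂ} (hz : z ∈ V)
    (hz' : starRingEnd ℂ z ∈ V) : ∃ t : ℝ, (t : ℂ) ∈ V := by
  have hIm := hV.image _ Complex.continuous_im.continuousOn
  have h0 : (0 : ℝ) ∈ Complex.im '' V := by
    rcases le_total 0 z.im with h | h
    · exact hIm.Icc_subset ⟨_, hz', rfl⟩ ⟨_, hz, rfl⟩ ⟨by simpa using h, h⟩
    · exact hIm.Icc_subset ⟨_, hz, rfl⟩ ⟨_, hz', rfl⟩ ⟨h, by simpa using h⟩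
  obtain ⟨w, hw, hw0⟩ := h0
  exact ⟨w.re, by rwa [← Complex.re_add_im w, hw0, Complex.ofReal_zero, zero_mul, add_zero] at hw⟩

lemma frequently_nhdsNE_ofReal {p : ℂ → Prop} {t : ℝ} (h : ∀ᶠ s : ℝ in 𝓝 t, p s) :
    ∃ᶠ z in 𝓝[≠] (t : ℂ), p z := by
  have hlim : Tendsto ((↑) : ℝ → ℂ) (𝓝[≠] t) (𝓝[≠] (t : ℂ)) :=
    Complex.continuous_ofReal.continuousWithinAt.tendsto_nhdsWithin
      fun s hs => Complex.ofReal_injective.ne hs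
  exact hlim.frequently (h.filter_mono nhdsWithin_le_nhds).frequently

theorem HasFDerivAt.differentiableAt_complex {E : Type*} [NormedAddCommGroup E]
    [NormedSpace ℝ E] [NormedSpace ℂ E] [IsScalarTower ℝ ℂ E] {u : ℂ → E} {D : ℂ →L[ℝ] E}
    {z : ℂ} (h : HasFDerivAt u D z) (hD : D Complex.I = Complex.I • D 1) :
    DifferentiableAt ℂ u z := by
  refine (hasFDerivAt_of_restrictScalars ℝ h
    (f' := ContinuousLinearMap.toSpanSingleton ℂ (D 1)) ?_).differentiableAt
  ext t
  have hsmul : ∀ (r : ℝ) (x : E), (r : ℂ) • x = r • x := algebraMap_smul ℂ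
  calc t • D 1 = ((t.re : ℂ) + t.im * Complex.I) • D 1 := by rw [Complex.re_add_im]
    _ = t.re • D 1 + t.im • Complex.I • D 1 := by rw [add_smul, mul_smul, hsmul, hsmul]
    _ = D t := by
      rw [← hD, ← map_smul, ← map_smul, ← map_add]
      simp only [Complex.real_smul, mul_one, Complex.re_add_im]

def SliceHolomorphicOn (I : ℍ) (u : ℂ → ℍ) (V : Set ℂ) : Prop :=
  ∀ z ∈ V, ∃ D : ℂ →L[ℝ] ℍ, HasFDerivAt u D z ∧ D Complex.I = I * D 1

namespace SliceHolomorphicOn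

variable {I : ℍ} {u v : ℂ → ℍ} {V : Set ℂ}

lemma add (hu : SliceHolomorphicOn I u V) (hv : SliceHolomorphicOn I v V) :
    SliceHolomorphicOn I (u + v) V := by
  intro z hz
  obtain ⟨D, hD, hDI⟩ := hu z hz
  obtain ⟨E, hE, hEI⟩ := hv z hz
  exact ⟨D + E, hD.add hE, by simp [hDI, hEI, mul_add]⟩

lemma const_mul {K c : ℍ} (hu : SliceHolomorphicOn K u V) (hc : c * K = I * c) :
    SliceHolomorphicOn I (fun z => c * u z) V := by
  intro z hz
  obtain ⟨D, hD, hDK⟩ := hu z hz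
  exact ⟨c • D, hD.const_mul c, by simp [hDK, ← mul_assoc, hc]⟩

theorem eqOn_of_frequently_eq (hI : I ∈ Sph) (hV : IsOpen V) (hVc : IsPreconnected V)
    (hu : SliceHolomorphicOn I u V) (hv : SliceHolomorphicOn I v V) {z₀ : ℂ} (hz₀ : z₀ ∈ V)
    (h : ∃ᶠ z in 𝓝[≠] z₀, u z = v z) : EqOn u v V := by
  let : Module ℂ ℍ := Module.compHom ℍ (Complex.liftAux I (mul_self_of_mem_sph hI)).toRingHom
  have smul_def (z : ℂ) (q : ℍ) : z • q = sliceMap I z * q := by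
    show Complex.liftAux I (mul_self_of_mem_sph hI) z * q = _
    simp [Complex.liftAux_apply, Quaternion.algebraMap_def]
  let : NormedSpace ℂ ℍ :=
    { norm_smul_le := fun z q => by rw [smul_def, norm_mul, norm_sliceMap hI] }
  have : IsScalarTower ℝ ℂ ℍ := ⟨fun r z q => by rw [smul_def, smul_def, map_smul, smul_mul_assoc]⟩
  have analytic {w : ℂ → ℍ} (hw : SliceHolomorphicOn I w V) : AnalyticOnNhd ℂ w V := by
    refine DifferentiableOn.analyticOnNhd (fun z hz => ?_) hV
    obtain ⟨D, hD, hDI⟩ := hw z hz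
    refine (hD.differentiableAt_complex ?_).differentiableWithinAt
    rw [hDI, smul_def, sliceMap_apply]
    simp
  exact (analytic hu).eqOn_of_preconnected_of_frequently_eq (analytic hv) hVc hz₀ h

end SliceHolomorphicOn

lemma SliceRegularOn.sliceHolomorphicOn {f : ℍ → ℍ} {U : Set ℍ} (hf : SliceRegularOn f U)
    {K : ℍ} (hK : K ∈ Sph) : SliceHolomorphicOn K (f ∘ sliceMap K) (sliceMap K ⁻¹' U) := by
  intro z hz
  set f' := fderiv ℝ f (sliceMap K z)
  have hCR : f' 1 + K * f' K = 0 := hf.2 K hK _ ⟨hz, range_sliceMap K ▸ mem_range_self z⟩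
  refine ⟨f'.comp (sliceMap K), (hf.1 _ hz).hasFDerivAt.comp z (sliceMap K).hasFDerivAt, ?_⟩
  have hKCR : K * (f' 1 + K * f' K) = 0 := by rw [hCR, mul_zero]
  rw [mul_add, ← mul_assoc, mul_self_of_mem_sph hK, neg_one_mul, add_neg_eq_zero] at hKCR
  simpa using hKCR.symm

theorem representation_formula_general (U : Set ℍ) (hsym : AxSymm U) (hsd : IsSDomain U)
    (f : ℍ → ℍ) (hf : SliceRegularOn f U) (J : ℍ) (hJ : J ∈ Sph) (x y : ℝ)
    (hp : (x : ℍ) + y • J ∈ U) :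
    ∀ I ∈ Sph,
      f ((x : ℍ) + y • I) =
          (2 : ℝ)⁻¹ • (f ((x : ℍ) + y • J) + f ((x : ℍ) - y • J))
            + I * ((2 : ℝ)⁻¹ • (J * (f ((x : ℍ) - y • J) - f ((x : ℍ) + y • J)))) ∧
      f ((x : ℍ) + y • I) =
          (2 : ℝ)⁻¹ • ((1 - I * J) * f ((x : ℍ) + y • J))
            + (2 : ℝ)⁻¹ • ((1 + I * J) * f ((x : ℍ) - y • J)) := by
  intro I hI
  obtain ⟨hUo, -, hUc⟩ := hsd
  have hJ' := neg_mem_sph hJ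
  have hVK {K : ℍ} (hK : K ∈ Sph) : sliceMap K ⁻¹' U = sliceMap J ⁻¹' U :=
    hsym.preimage_sliceMap_eq hK hJ
  have hol {K : ℍ} (hK : K ∈ Sph) : SliceHolomorphicOn K (f ∘ sliceMap K) (sliceMap J ⁻¹' U) :=
    hVK hK ▸ hf.sliceHolomorphicOn hK
  have hxy : (⟨x, y⟩ : ℂ) ∈ sliceMap J ⁻¹' U := by simpa using hp
  have hVc := isPreconnected_preimage_sliceMap hJ (hUc J hJ).isPreconnected
  obtain ⟨t, ht⟩ := hVc.exists_ofReal_mem hxy <| by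
    rwa [mem_preimage, sliceMap_conj, ← mem_preimage, hVK hJ']
  let c (K : ℍ) : ℍ := (2 : ℝ)⁻¹ • (1 - I * K)
  have hc {K : ℍ} (hK : K ∈ Sph) : c K * K = I * c K := by
    rw [smul_mul_assoc, mul_smul_comm, sub_mul, mul_sub, mul_assoc, mul_self_of_mem_sph hK,
      ← mul_assoc, mul_self_of_mem_sph hI]
    noncomm_ring
  have hv := ((hol hJ).const_mul (hc hJ)).add ((hol hJ').const_mul (hc hJ'))
  have hreal (s : ℝ) :
      f (sliceMap I s) = c J * f (sliceMap J s) + c (-J) * f (sliceMap (-J) s) := by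
    rw [sliceMap_ofReal, sliceMap_ofReal, sliceMap_ofReal, ← add_mul, ← smul_add, mul_neg,
      sub_neg_eq_add, sub_add_add_cancel, ← two_smul ℝ, smul_smul, inv_mul_cancel₀ two_ne_zero,
      one_smul, one_mul]
  have key := (hol hI).eqOn_of_frequently_eq hI (hUo.preimage (sliceMap J).continuous) hVc hv ht
    (frequently_nhdsNE_ofReal (.of_forall hreal)) hxy
  simp only [sliceMap_apply, Function.comp_apply, Pi.add_apply, smul_neg, ← sub_eq_add_neg, c,
    mul_neg, sub_neg_eq_add, smul_mul_assoc] at key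
  refine ⟨?_, key⟩
  rw [key, mul_smul_comm, ← smul_add, ← smul_add]
  noncomm_ring

/-- **Representation Formula.** For `f` slice regular on an axially symmetric s-domain `U`,
`J ∈ 𝕊` and `x ± Jy ∈ U`, one has, for every `I ∈ 𝕊`,
`f(x+Iy) = ½[f(x+Jy)+f(x−Jy)] + I·½[J(f(x−Jy)−f(x+Jy))] = ½(1−IJ)f(x+Jy) + ½(1+IJ)f(x−Jy)`. -/
theorem representation_formula (U : Set ℍ) (hsym : AxSymm U) (hsd : IsSDomain U)
    (f : ℍ → ℍ) (hf : SliceRegularOn f U) (J : ℍ) (hJ : J ∈ Sph) (x y : ℝ)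
    (hp : (x : ℍ) + y • J ∈ U) (hm : (x : ℍ) - y • J ∈ U) :
    ∀ I ∈ Sph,
      f ((x : ℍ) + y • I) =
          (2 : ℝ)⁻¹ • (f ((x : ℍ) + y • J) + f ((x : ℍ) - y • J))
            + I * ((2 : ℝ)⁻¹ • (J * (f ((x : ℍ) - y • J) - f ((x : ℍ) + y • J)))) ∧
      f ((x : ℍ) + y • I) =
          (2 : ℝ)⁻¹ • ((1 - I * J) * f ((x : ℍ) + y • J))
            + (2 : ℝ)⁻¹ • ((1 + I * J) * f ((x : ℍ) - y • J)) :=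
  representation_formula_general U hsym hsd f hf J hJ x y hp

end
end
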